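/- If two stationary policies π₁, π₂ on a finite belief space satisfy, for all b, Σ_a |π₁(a|b) - π₂(a|b)| ≤ Δ, and all action-value functions are bounded by R_max/(1-γ), then the value functions satisfy ‖V^{π₁} - V^{π₂}‖_∞ ≤ (Δ · R_max) / (1-γ)². -/
import Mathlib


/-- Value difference under policy perturbation: if two policies differ in total variation
by at most Δ at each belief, action-values are bounded by R_max/(1-γ), and the standard
value-difference decomposition holds, then ‖V^{π₁} - V^{π₂}‖_∞ ≤ Δ R_max/(1-γ)². -/
theorem stmt_5 {B A : Type*} [Fintype B] [Fintype A]
    (γ Rmax Δ : ℝ) (hγ0 : 0 ≤ γ) (hγ1 : γ < 1) (hR : 0 ≤ Rmax) (hΔ : 0 ≤ Δ)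
    (π₁ π₂ : B → A → ℝ) (V₁ V₂ : B → ℝ) (Q₂ : B → A → ℝ) (T : B → B → ℝ)
    (hTnn : ∀ b b', 0 ≤ T b b') (hTsum : ∀ b, ∑ b', T b b' = 1)
    (hTV : ∀ b, ∑ a, |π₁ b a - π₂ b a| ≤ Δ)
    (hQ : ∀ b a, |Q₂ b a| ≤ Rmax / (1 - γ))
    (hdecomp : ∀ b, V₁ b - V₂ b =
      (∑ a, (π₁ b a - π₂ b a) * Q₂ b a) +
        γ * ∑ b', T b b' * (V₁ b' - V₂ b')) :
    ∀ b, |V₁ b - V₂ b| ≤ Δ * Rmax / (1 - γ) ^ 2 := by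
  intro b₀
  have h1γ : 0 < 1 - γ := by linarith
  obtain ⟨b, -, hb⟩ := Finset.exists_max_image Finset.univ (fun b => |V₁ b - V₂ b|)
    ⟨b₀, Finset.mem_univ b₀⟩
  set M := |V₁ b - V₂ b| with hM
  have hMnn : 0 ≤ M := abs_nonneg _
  have hQb : 0 ≤ Rmax / (1 - γ) := div_nonneg hR h1γ.le
  -- bound on the first sum
  have hsum1 : |∑ a, (π₁ b a - π₂ b a) * Q₂ b a| ≤ Δ * (Rmax / (1 - γ)) := by
    calc |∑ a, (π₁ b a - π₂ b a) * Q₂ b a|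
        ≤ ∑ a, |(π₁ b a - π₂ b a) * Q₂ b a| := Finset.abs_sum_le_sum_abs _ _
      _ ≤ ∑ a, |π₁ b a - π₂ b a| * (Rmax / (1 - γ)) := by
          apply Finset.sum_le_sum
          intro a _
          rw [abs_mul]
          exact mul_le_mul_of_nonneg_left (hQ b a) (abs_nonneg _)
      _ = (∑ a, |π₁ b a - π₂ b a|) * (Rmax / (1 - γ)) := by
          rw [Finset.sum_mul]
      _ ≤ Δ * (Rmax / (1 - γ)) := mul_le_mul_of_nonneg_right (hTV b) hQb
  -- bound on the second sum
  have hsum2 : |∑ b', T b b' * (V₁ b' - V₂ b')| ≤ M := by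
    calc |∑ b', T b b' * (V₁ b' - V₂ b')|
        ≤ ∑ b', |T b b' * (V₁ b' - V₂ b')| := Finset.abs_sum_le_sum_abs _ _
      _ ≤ ∑ b', T b b' * M := by
          apply Finset.sum_le_sum
          intro b' _
          rw [abs_mul, abs_of_nonneg (hTnn b b')]
          exact mul_le_mul_of_nonneg_left (hb b' (Finset.mem_univ b')) (hTnn b b')
      _ = M := by rw [← Finset.sum_mul, hTsum, one_mul]
  have hkey : M ≤ Δ * (Rmax / (1 - γ)) + γ * M := by
    calc M = |(∑ a, (π₁ b a - π₂ b a) * Q₂ b a) +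
        γ * ∑ b', T b b' * (V₁ b' - V₂ b')| := by rw [hM, hdecomp b]
      _ ≤ |∑ a, (π₁ b a - π₂ b a) * Q₂ b a| +
          |γ * ∑ b', T b b' * (V₁ b' - V₂ b')| := abs_add_le _ _
      _ ≤ Δ * (Rmax / (1 - γ)) + γ * M := by
          rw [abs_mul, abs_of_nonneg hγ0]
          exact add_le_add hsum1 (mul_le_mul_of_nonneg_left hsum2 hγ0)
  have hMle : M ≤ Δ * Rmax / (1 - γ) ^ 2 := by
    rw [le_div_iff₀ (pow_pos h1γ 2)]
    have h2 : Δ * (Rmax / (1 - γ)) * (1 - γ) = Δ * Rmax := by field_simp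
    nlinarith [mul_le_mul_of_nonneg_right hkey h1γ.le, sq_nonneg (1 - γ)]
  exact le_trans (hb b₀ (Finset.mem_univ b₀)) hMle
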